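/- arXiv:2402.10759 — 2 statements merged into one kernel-verified Lean document; each statement's English description precedes it below -/
import Mathlib

section
/- Let σ, τ > −1 and β ∈ ℝ satisfy max(σ,τ)/2 − 1 < β ≤ (σ+τ)/2. Then there exists a constant c > 0 such that for every holomorphic function f on the unit disc 𝔻, c · ∫_𝔻 |f'(z)|² (1−|z|²)^{σ+τ−2β} dA(z) ≤ ∫_𝔻 ∫_𝔻 (|f(z) − f(w)|² / |1 − conj(w)·z|^{2(β+2)}) (1−|z|²)^σ (1−|w|²)^τ dA(z) dA(w). -/
open MeasureTheory Metric ComplexConjugate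

/-- The normalized Lebesgue area measure `dA = (1/π) dx dy` on `ℂ`. -/
noncomputable def dA : Measure ℂ := ENNReal.ofReal (1 / Real.pi) • volume

/-!
Fix `z ∈ 𝔻` and let `ρ = (1 - |z|) / 2`. On the disc `|w - z| < ρ` both `1 - |w|²` and
`|1 - w̄ z|` lie between `(1 - |z|²) / 4` and `3 (1 - |z|²)`, so the inner integral dominates
`(1 - |z|²) ^ (σ + τ - 2β - 4) · ∫_{|w - z| < ρ} |f w - f z|² dw` up to a constant.
The mean value property of the holomorphic function `dslope f z`, whose value at `z` is `f' z`,
together with Jensen's inequality, bounds `r² |f' z|²` by the average of `|f - f z|²` over the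
circle `|w - z| = r`; integrating in polar coordinates gives
`∫_{|w - z| < ρ} |f w - f z|² dw ≥ (π / 2) ρ⁴ |f' z|²`, and `ρ ≥ (1 - |z|²) / 4`.
-/

open scoped ENNReal

open Real Set

lemma min_rpow_mul_rpow_le_rpow {a t c₁ c₂ : ℝ} (ha : 0 < a) (hc₁ : 0 < c₁)
    (h₁ : c₁ * a ≤ t) (h₂ : t ≤ c₂ * a) (s : ℝ) :
    min (c₁ ^ s) (c₂ ^ s) * a ^ s ≤ t ^ s := by
  rcases le_total 0 s with hs | hs
  · calc min (c₁ ^ s) (c₂ ^ s) * a ^ s ≤ c₁ ^ s * a ^ s := by gcongr; exact min_le_left _ _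
      _ = (c₁ * a) ^ s := (mul_rpow hc₁.le ha.le).symm
      _ ≤ t ^ s := by gcongr
  · calc min (c₁ ^ s) (c₂ ^ s) * a ^ s ≤ c₂ ^ s * a ^ s := by gcongr; exact min_le_right _ _
      _ = (c₂ * a) ^ s := (mul_rpow (by nlinarith) ha.le).symm
      _ ≤ t ^ s := rpow_le_rpow_of_nonpos ((mul_pos hc₁ ha).trans_le h₁) h₂ hs

lemma sq_circleAverage_le_circleAverage_sq {g : ℂ → ℝ} {c : ℂ} {R : ℝ}
    (hg : ContinuousOn g (sphere c |R|)) :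
    circleAverage g c R ^ 2 ≤ circleAverage (fun w ↦ g w ^ 2) c R := by
  have hg₂ : ContinuousOn (fun w ↦ g w ^ 2) (sphere c |R|) := hg.pow 2
  have : NeZero (volume (Ioc 0 (2 * π))) := ⟨by simp [pi_pos]⟩
  simp only [circleAverage_eq_intervalAverage, uIoc_of_le two_pi_pos.le]
  exact (even_two.convexOn_pow).map_average_le (continuous_pow 2).continuousOn isClosed_univ
    (by simp) hg.circleIntegrable'.1 hg₂.circleIntegrable'.1

lemma mul_norm_deriv_le_circleAverage {E : Type*} [NormedAddCommGroup E] [NormedSpace ℂ E]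
    [CompleteSpace E] {f : ℂ → E} {c : ℂ} {R : ℝ}
    (hR : 0 < R) (hf : DiffContOnCl ℂ f (ball c R)) :
    R * ‖deriv f c‖ ≤ circleAverage (fun w ↦ ‖f w - f c‖) c R := by
  have hslope : DiffContOnCl ℂ (dslope f c) (ball c R) := by
    refine ⟨(Complex.differentiableOn_dslope (ball_mem_nhds c hR)).2 hf.differentiableOn, ?_⟩
    rw [closure_ball c hR.ne']
    exact (continuousOn_dslope (closedBall_mem_nhds c hR)).2
      ⟨hf.continuousOn_ball, hf.differentiableAt isOpen_ball (mem_ball_self hR)⟩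
  have hmean : circleAverage (dslope f c) c R = deriv f c := by
    rw [← dslope_same]
    exact (abs_of_pos hR ▸ hslope).circleAverage
  have hnorm : ‖circleAverage (dslope f c) c R‖
      ≤ circleAverage (fun w ↦ ‖dslope f c w‖) c R := by
    simp only [circleAverage_def, norm_smul, smul_eq_mul, norm_inv, Real.norm_of_nonneg
      two_pi_pos.le]
    gcongr
    exact intervalIntegral.norm_integral_le_integral_norm two_pi_pos.le
  have hsphere : EqOn (fun w ↦ ‖f w - f c‖) (fun w ↦ R • ‖dslope f c w‖) (sphere c |R|) := by
    intro w hw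
    rw [abs_of_pos hR, mem_sphere, dist_eq_norm] at hw
    have hwc : w ≠ c := by rintro rfl; simp at hw; exact hR.ne hw
    simp [dslope_of_ne f hwc, slope_def_module, norm_smul, hw, hR.ne']
  rw [circleAverage_congr_sphere hsphere, circleAverage_fun_smul, smul_eq_mul, ← hmean]
  gcongr

lemma sq_mul_sq_norm_deriv_le_circleAverage {E : Type*} [NormedAddCommGroup E]
    [NormedSpace ℂ E] [CompleteSpace E] {f : ℂ → E} {c : ℂ} {R : ℝ}
    (hR : 0 < R) (hf : DiffContOnCl ℂ f (ball c R)) :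
    R ^ 2 * ‖deriv f c‖ ^ 2 ≤ circleAverage (fun w ↦ ‖f w - f c‖ ^ 2) c R := by
  have hcont : ContinuousOn (fun w ↦ ‖f w - f c‖) (sphere c |R|) := by
    rw [abs_of_pos hR]
    exact ((hf.continuousOn_ball.mono sphere_subset_closedBall).sub continuousOn_const).norm
  calc R ^ 2 * ‖deriv f c‖ ^ 2 = (R * ‖deriv f c‖) ^ 2 := by ring
    _ ≤ circleAverage (fun w ↦ ‖f w - f c‖) c R ^ 2 := by
      gcongr
      exact mul_norm_deriv_le_circleAverage hR hf
    _ ≤ _ := sq_circleAverage_le_circleAverage_sq hcont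

lemma ofReal_integral_le_lintegral_ofReal {α : Type*} [MeasurableSpace α] {μ : Measure α}
    {g : α → ℝ} (hg : 0 ≤ᵐ[μ] g) :
    ENNReal.ofReal (∫ x, g x ∂μ) ≤ ∫⁻ x, ENNReal.ofReal (g x) ∂μ := by
  calc ENNReal.ofReal (∫ x, g x ∂μ) = ‖∫ x, g x ∂μ‖ₑ :=
        (Real.enorm_of_nonneg (integral_nonneg_of_ae hg)).symm
    _ ≤ ∫⁻ x, ‖g x‖ₑ ∂μ := enorm_integral_le_lintegral_enorm _
    _ = ∫⁻ x, ENNReal.ofReal (g x) ∂μ :=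
        lintegral_congr_ae (hg.mono fun x hx ↦ Real.enorm_of_nonneg hx)

lemma ofReal_two_pi_mul_circleAverage_le_lintegral {g : ℂ → ℝ} (hg : 0 ≤ g) (c : ℂ) (R : ℝ) :
    ENNReal.ofReal (2 * π * circleAverage g c R)
      ≤ ∫⁻ θ in Ioo (-π) π, ENNReal.ofReal (g (circleMap c R θ)) := by
  have hshift : 2 * π * circleAverage g c R = ∫ θ in Ioo (-π) π, g (circleMap c R θ) := by
    rw [circleAverage_eq_integral_add (-π), smul_eq_mul, ← mul_assoc,
      mul_inv_cancel₀ two_pi_pos.ne', one_mul,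
      intervalIntegral.integral_comp_add_right (fun θ ↦ g (circleMap c R θ)),
      intervalIntegral.integral_of_le (by linarith [pi_pos]), integral_Ioc_eq_integral_Ioo]
    ring_nf
  rw [hshift]
  exact ofReal_integral_le_lintegral_ofReal (ae_of_all _ fun θ ↦ hg _)

lemma lintegral_ball_eq_lintegral_polar (c : ℂ) (ρ : ℝ) {G : ℂ → ℝ≥0∞}
    (hG : ContinuousOn G (ball c ρ)) :
    ∫⁻ w in ball c ρ, G w
      = ∫⁻ r in Ioo 0 ρ, ENNReal.ofReal r * ∫⁻ θ in Ioo (-π) π, G (circleMap c r θ) := by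
  have hcircle : ∀ p : ℝ × ℝ, c + Complex.polarCoord.symm p = circleMap c p.1 p.2 := by
    intro p
    simp [Complex.polarCoord_symm_apply, circleMap, Complex.exp_mul_I]
  have htranslate : ∫⁻ w in ball c ρ, G w = ∫⁻ w in ball 0 ρ, G (c + w) := by
    rw [← (measurePreserving_add_left volume c).setLIntegral_comp_preimage_emb
      (measurableEmbedding_addLeft c)]
    congr 2
    ext w
    simp
  have hrect : Iio ρ ×ˢ univ ∩ Complex.polarCoord.target = Ioo 0 ρ ×ˢ Ioo (-π) π := by
    ext ⟨r, θ⟩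
    simp [Complex.polarCoord_target]
    tauto
  have hpolar : ∫⁻ w in ball 0 ρ, G (c + w)
      = ∫⁻ p in Ioo 0 ρ ×ˢ Ioo (-π) π, ENNReal.ofReal p.1 * G (circleMap c p.1 p.2) := by
    rw [← lintegral_indicator measurableSet_ball, ← Complex.lintegral_comp_polarCoord_symm,
      ← hrect, ← Measure.restrict_restrict (measurableSet_Iio.prod MeasurableSet.univ),
      ← lintegral_indicator (measurableSet_Iio.prod MeasurableSet.univ)]
    refine setLIntegral_congr_fun polarCoord.open_target.measurableSet fun p hp ↦ ?_
    have hp₁ : 0 < p.1 := hp.1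
    have hmem : Complex.polarCoord.symm p ∈ ball 0 ρ ↔ p ∈ Iio ρ ×ˢ univ := by
      simp [-Complex.polarCoord_symm_apply, Complex.norm_polarCoord_symm, abs_of_pos hp₁]
    by_cases hpρ : p ∈ Iio ρ ×ˢ univ
    · simp only [indicator_of_mem (hmem.2 hpρ), indicator_of_mem hpρ, smul_eq_mul, hcircle]
    · simp only [indicator_of_notMem (mt hmem.1 hpρ), indicator_of_notMem hpρ, smul_zero]
  have hmaps :
      MapsTo (fun p : ℝ × ℝ ↦ circleMap c p.1 p.2) (Ioo 0 ρ ×ˢ Ioo (-π) π) (ball c ρ) := by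
    rintro ⟨r, θ⟩ ⟨hr, -⟩
    simp [dist_eq_norm, circleMap_sub_center, abs_of_pos hr.1, hr.2]
  have hmeas : AEMeasurable (fun p : ℝ × ℝ ↦ ENNReal.ofReal p.1 * G (circleMap c p.1 p.2))
      ((volume.prod volume).restrict (Ioo 0 ρ ×ˢ Ioo (-π) π)) := by
    refine (ENNReal.measurable_ofReal.comp measurable_fst).aemeasurable.mul ?_
    exact (hG.comp (by fun_prop) hmaps).aemeasurable (measurableSet_Ioo.prod measurableSet_Ioo)
  rw [htranslate, hpolar, Measure.volume_eq_prod, setLIntegral_prod _ hmeas]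
  simp only [lintegral_const_mul' _ _ ENNReal.ofReal_ne_top]

lemma ofReal_mul_sq_norm_deriv_le_lintegral_ball {E : Type*} [NormedAddCommGroup E]
    [NormedSpace ℂ E] [CompleteSpace E] {f : ℂ → E} {c : ℂ} {ρ : ℝ} (hρ : 0 ≤ ρ)
    (hf : DifferentiableOn ℂ f (ball c ρ)) :
    ENNReal.ofReal (π / 2 * ρ ^ 4 * ‖deriv f c‖ ^ 2)
      ≤ ∫⁻ w in ball c ρ, ENNReal.ofReal (‖f w - f c‖ ^ 2) := by
  have hcont : ContinuousOn (fun w ↦ ENNReal.ofReal (‖f w - f c‖ ^ 2)) (ball c ρ) :=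
    ENNReal.continuous_ofReal.comp_continuousOn
      ((hf.continuousOn.sub continuousOn_const).norm.pow 2)
  have hradial : ∫ r in Ioo 0 ρ, 2 * π * ‖deriv f c‖ ^ 2 * r ^ 3
      = π / 2 * ρ ^ 4 * ‖deriv f c‖ ^ 2 := by
    rw [← integral_Ioc_eq_integral_Ioo, ← intervalIntegral.integral_of_le hρ,
      intervalIntegral.integral_const_mul, integral_pow]
    ring
  rw [lintegral_ball_eq_lintegral_polar c ρ hcont, ← hradial]
  refine (ofReal_integral_le_lintegral_ofReal ?_).trans (setLIntegral_mono' measurableSet_Ioo ?_)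
  · filter_upwards [ae_restrict_mem measurableSet_Ioo] with r hr
    have := hr.1.le
    positivity
  intro r hr
  have hfr : DiffContOnCl ℂ f (ball c r) := hf.diffContOnCl_ball (closedBall_subset_ball hr.2)
  calc ENNReal.ofReal (2 * π * ‖deriv f c‖ ^ 2 * r ^ 3)
      = ENNReal.ofReal r * ENNReal.ofReal (2 * π * (r ^ 2 * ‖deriv f c‖ ^ 2)) := by
        rw [← ENNReal.ofReal_mul hr.1.le]
        ring_nf
    _ ≤ ENNReal.ofReal r *
          ENNReal.ofReal (2 * π * circleAverage (fun w ↦ ‖f w - f c‖ ^ 2) c r) := by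
        gcongr
        exact sq_mul_sq_norm_deriv_le_circleAverage hr.1 hfr
    _ ≤ _ := by
        gcongr
        exact ofReal_two_pi_mul_circleAverage_le_lintegral (fun w ↦ by positivity) c r

section Disc

variable {z w : ℂ}

lemma one_sub_sq_norm_mem_Icc (hz : ‖z‖ < 1) (hw : w ∈ ball z ((1 - ‖z‖) / 2)) :
    1 - ‖w‖ ^ 2 ∈ Icc (1 / 4 * (1 - ‖z‖ ^ 2)) (3 * (1 - ‖z‖ ^ 2)) := by
  rw [mem_ball, dist_eq_norm] at hw
  have h₁ := norm_sub_norm_le w z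
  have h₂ := norm_sub_norm_le z w
  rw [norm_sub_rev] at h₂
  have := norm_nonneg z
  have := norm_nonneg w
  constructor <;> nlinarith

lemma norm_one_sub_conj_mul_mem_Icc (hz : ‖z‖ < 1) (hw : w ∈ ball z ((1 - ‖z‖) / 2)) :
    ‖1 - conj w * z‖ ∈ Icc (1 / 4 * (1 - ‖z‖ ^ 2)) (3 * (1 - ‖z‖ ^ 2)) := by
  rw [mem_ball, dist_eq_norm] at hw
  have hw₁ : ‖w‖ < 1 := by linarith [norm_sub_norm_le w z]
  have := norm_nonneg z
  have := norm_nonneg w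
  constructor
  · calc 1 / 4 * (1 - ‖z‖ ^ 2) ≤ 1 - ‖w‖ * ‖z‖ := by nlinarith
      _ = ‖(1 : ℂ)‖ - ‖conj w * z‖ := by simp
      _ ≤ ‖1 - conj w * z‖ := norm_sub_norm_le _ _
  · have hsplit : 1 - conj w * z = (1 - ‖z‖ ^ 2 : ℝ) + conj (z - w) * z := by
      push_cast
      rw [← Complex.conj_mul', map_sub]
      ring
    calc ‖1 - conj w * z‖ ≤ |1 - ‖z‖ ^ 2| + ‖w - z‖ * ‖z‖ := by
          rw [hsplit]
          refine (norm_add_le _ _).trans_eq ?_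
          rw [Complex.norm_real, Real.norm_eq_abs, norm_mul, RCLike.norm_conj, norm_sub_rev]
      _ ≤ 3 * (1 - ‖z‖ ^ 2) := by
        rw [abs_of_nonneg (by nlinarith)]
        nlinarith

end Disc

lemma exists_pos_ofReal_mul_le_lintegral_kernel (σ τ β : ℝ) {E : Type*} [NormedAddCommGroup E]
    [NormedSpace ℂ E] [CompleteSpace E] :
    ∃ c : ℝ, 0 < c ∧ ∀ f : ℂ → E, DifferentiableOn ℂ f (ball 0 1) → ∀ z ∈ ball (0 : ℂ) 1,
      ENNReal.ofReal (c * (‖deriv f z‖ ^ 2 * (1 - ‖z‖ ^ 2) ^ (σ + τ - 2 * β)))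
        ≤ ∫⁻ w in ball (0 : ℂ) 1,
            ENNReal.ofReal (‖f z - f w‖ ^ 2 / ‖1 - conj w * z‖ ^ (2 * (β + 2)) *
              (1 - ‖z‖ ^ 2) ^ σ * (1 - ‖w‖ ^ 2) ^ τ) := by
  set e := 2 * (β + 2)
  set κ : ℝ → ℝ := fun s ↦ min ((1 / 4 : ℝ) ^ s) ((3 : ℝ) ^ s)
  have hκ : ∀ s, 0 < κ s := fun s ↦ lt_min (by positivity) (by positivity)
  have := hκ (-e)
  have := hκ τ
  refine ⟨κ (-e) * κ τ * π / 512, by positivity, fun f hf z hz ↦ ?_⟩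
  rw [mem_ball_zero_iff] at hz
  set D := 1 - ‖z‖ ^ 2
  set ρ := (1 - ‖z‖) / 2
  have := norm_nonneg z
  have hD : 0 < D := by simp only [D]; nlinarith
  have hρ : D / 4 ≤ ρ := by simp only [D, ρ]; nlinarith
  have hball : closedBall z ρ ⊆ ball 0 1 :=
    closedBall_subset_ball' (by simp only [ρ, dist_zero_right]; linarith)
  have hweight : ∀ w ∈ ball z ρ,
      ENNReal.ofReal (κ (-e) * κ τ * D ^ (σ + τ - e) * ‖f w - f z‖ ^ 2)
        ≤ ENNReal.ofReal (‖f z - f w‖ ^ 2 / ‖1 - conj w * z‖ ^ e * D ^ σ *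
            (1 - ‖w‖ ^ 2) ^ τ) := by
    intro w hw
    obtain ⟨hw₁, hw₂⟩ := one_sub_sq_norm_mem_Icc hz hw
    obtain ⟨hw₃, hw₄⟩ := norm_one_sub_conj_mul_mem_Icc hz hw
    have hτ := min_rpow_mul_rpow_le_rpow hD (by norm_num) hw₁ hw₂ τ
    have he := min_rpow_mul_rpow_le_rpow hD (by norm_num) hw₃ hw₄ (-e)
    apply ENNReal.ofReal_le_ofReal
    rw [norm_sub_rev (f z), div_eq_mul_inv, ← rpow_neg (norm_nonneg _),
      show σ + τ - e = σ + τ + -e by ring, rpow_add hD, rpow_add hD]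
    calc κ (-e) * κ τ * (D ^ σ * D ^ τ * D ^ (-e)) * ‖f w - f z‖ ^ 2
        = ‖f w - f z‖ ^ 2 * (κ (-e) * D ^ (-e)) * D ^ σ * (κ τ * D ^ τ) := by ring
      _ ≤ _ := by gcongr
  calc ENNReal.ofReal (κ (-e) * κ τ * π / 512 * (‖deriv f z‖ ^ 2 * D ^ (σ + τ - 2 * β)))
      ≤ ENNReal.ofReal (κ (-e) * κ τ * D ^ (σ + τ - e)) *
          ENNReal.ofReal (π / 2 * ρ ^ 4 * ‖deriv f z‖ ^ 2) := by
        rw [← ENNReal.ofReal_mul (by positivity)]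
        apply ENNReal.ofReal_le_ofReal
        rw [show σ + τ - 2 * β = σ + τ - e + (4 : ℕ) by push_cast; ring, rpow_add hD,
          rpow_natCast]
        calc κ (-e) * κ τ * π / 512 * (‖deriv f z‖ ^ 2 * (D ^ (σ + τ - e) * D ^ 4))
            = κ (-e) * κ τ * D ^ (σ + τ - e) * (π / 2 * (D / 4) ^ 4 * ‖deriv f z‖ ^ 2) := by
              ring
          _ ≤ _ := by gcongr
    _ ≤ ENNReal.ofReal (κ (-e) * κ τ * D ^ (σ + τ - e)) *
          ∫⁻ w in ball z ρ, ENNReal.ofReal (‖f w - f z‖ ^ 2) := by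
        gcongr
        exact ofReal_mul_sq_norm_deriv_le_lintegral_ball (by linarith)
          (hf.mono (ball_subset_closedBall.trans hball))
    _ = ∫⁻ w in ball z ρ,
          ENNReal.ofReal (κ (-e) * κ τ * D ^ (σ + τ - e) * ‖f w - f z‖ ^ 2) := by
        rw [← lintegral_const_mul' _ _ ENNReal.ofReal_ne_top]
        simp_rw [ENNReal.ofReal_mul (by positivity : 0 ≤ κ (-e) * κ τ * D ^ (σ + τ - e))]
    _ ≤ ∫⁻ w in ball z ρ, ENNReal.ofReal (‖f z - f w‖ ^ 2 / ‖1 - conj w * z‖ ^ e * D ^ σ *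
            (1 - ‖w‖ ^ 2) ^ τ) := setLIntegral_mono' measurableSet_ball hweight
    _ ≤ _ := lintegral_mono_set (ball_subset_closedBall.trans hball)

lemma setLIntegral_dA (s : Set ℂ) (g : ℂ → ℝ≥0∞) :
    ∫⁻ z in s, g z ∂dA = ENNReal.ofReal (1 / π) * ∫⁻ z in s, g z := by
  rw [dA, Measure.restrict_smul, lintegral_smul_measure, smul_eq_mul]

theorem dirichlet_le_double_integral_general (σ τ β : ℝ) :
    ∃ c : ℝ, 0 < c ∧ ∀ f : ℂ → ℂ, DifferentiableOn ℂ f (ball 0 1) →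
      ENNReal.ofReal c *
          (∫⁻ z in ball (0 : ℂ) 1,
            ENNReal.ofReal (‖deriv f z‖ ^ 2 * (1 - ‖z‖ ^ 2) ^ (σ + τ - 2 * β)) ∂dA)
        ≤ ∫⁻ z in ball (0 : ℂ) 1, ∫⁻ w in ball (0 : ℂ) 1,
            ENNReal.ofReal (‖f z - f w‖ ^ 2 / ‖1 - conj w * z‖ ^ (2 * (β + 2)) *
              (1 - ‖z‖ ^ 2) ^ σ * (1 - ‖w‖ ^ 2) ^ τ) ∂dA ∂dA := by
  obtain ⟨c, hc, hkernel⟩ := exists_pos_ofReal_mul_le_lintegral_kernel σ τ β (E := ℂ)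
  refine ⟨c / π, by positivity, fun f hf ↦ ?_⟩
  rw [← lintegral_const_mul' _ _ ENNReal.ofReal_ne_top]
  refine setLIntegral_mono' measurableSet_ball fun z hz ↦ ?_
  rw [setLIntegral_dA, ← ENNReal.ofReal_mul (by positivity), div_eq_mul_one_div, mul_comm c,
    mul_assoc, ENNReal.ofReal_mul (by positivity)]
  gcongr
  exact hkernel f hf z hz

/-- Lower bound in the double-integral characterization of Dirichlet-type spaces:
for `σ, τ > -1` and `max(σ,τ)/2 - 1 < β ≤ (σ+τ)/2`, the squared `𝒟_{σ+τ-2β}(𝔻)`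
seminorm of `f` is controlled by the double integral of
`|f z - f w|² / |1 - conj w * z|^{2(β+2)}` against `dA_σ × dA_τ`. -/
theorem dirichlet_le_double_integral (σ τ β : ℝ) (hσ : -1 < σ) (hτ : -1 < τ)
    (hβ1 : max σ τ / 2 - 1 < β) (hβ2 : β ≤ (σ + τ) / 2) :
    ∃ c : ℝ, 0 < c ∧ ∀ f : ℂ → ℂ, DifferentiableOn ℂ f (ball 0 1) →
      ENNReal.ofReal c *
          (∫⁻ z in ball (0 : ℂ) 1,
            ENNReal.ofReal (‖deriv f z‖ ^ 2 * (1 - ‖z‖ ^ 2) ^ (σ + τ - 2 * β)) ∂dA)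
        ≤ ∫⁻ z in ball (0 : ℂ) 1, ∫⁻ w in ball (0 : ℂ) 1,
            ENNReal.ofReal (‖f z - f w‖ ^ 2 / ‖1 - conj w * z‖ ^ (2 * (β + 2)) *
              (1 - ‖z‖ ^ 2) ^ σ * (1 - ‖w‖ ^ 2) ^ τ) ∂dA ∂dA :=
  dirichlet_le_double_integral_general σ τ β
end

section
/- Let φ be a holomorphic self-map of the unit disc 𝔻 that extends to a C¹ map on the closed disc, and let ζ ∈ ℂ with |ζ| = 1 be a boundary point such that |φ(ζ)| = 1 (where φ(ζ) denotes the value of the continuous extension). Then the boundary value of the derivative of φ at ζ is nonzero; that is, if g is the continuous extension of the derivative φ' to the closed unit disc, then g(ζ) ≠ 0. -/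
/-!
Composing `φ` with the disc automorphism that sends `φ 0` to `0` and applying the Schwarz lemma
gives a Hopf-type estimate `c * (1 - ‖z‖) ≤ 1 - ‖φ z‖` with `c > 0`. Along the radial map
`t ↦ φ (t * ζ)` it reads `‖φ ζ‖ - ‖φ (t * ζ)‖ ≥ c * (1 - t)`, so its left derivative at `t = 1`
has norm at least `c`; since `φ'` extends continuously, that derivative is `g ζ * ζ`.
-/

open Metric Set Filter Topology ComplexConjugate

namespace Complex

theorem norm_one_sub_conj_mul_sq_sub_norm_sub_sq (a b : ℂ) :
    ‖1 - conj a * b‖ ^ 2 - ‖b - a‖ ^ 2 = (1 - ‖a‖ ^ 2) * (1 - ‖b‖ ^ 2) := by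
  simp only [Complex.sq_norm, normSq_apply, sub_re, sub_im, mul_re, mul_im, one_re, one_im,
    conj_re, conj_im]
  ring

theorem one_sub_conj_mul_ne_zero {a b : ℂ} (ha : ‖a‖ < 1) (hb : ‖b‖ < 1) :
    1 - conj a * b ≠ 0 := by
  have : ‖conj a * b‖ < 1 := by
    rw [norm_mul, norm_conj]
    exact mul_lt_one_of_nonneg_of_lt_one_left (norm_nonneg a) ha hb.le
  intro h
  rw [← sub_eq_zero.1 h, norm_one] at this
  exact this.false

theorem norm_sub_div_one_sub_conj_mul_lt_one {a b : ℂ} (ha : ‖a‖ < 1) (hb : ‖b‖ < 1) :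
    ‖(b - a) / (1 - conj a * b)‖ < 1 := by
  have hD := one_sub_conj_mul_ne_zero ha hb
  rw [norm_div, div_lt_one (norm_pos_iff.2 hD), ← sq_lt_sq₀ (norm_nonneg _) (norm_nonneg _),
    ← sub_pos, norm_one_sub_conj_mul_sq_sub_norm_sub_sq]
  have hA : ‖a‖ ^ 2 < 1 := by nlinarith [norm_nonneg a]
  have hB : ‖b‖ ^ 2 < 1 := by nlinarith [norm_nonneg b]
  exact mul_pos (sub_pos.2 hA) (sub_pos.2 hB)

end Complex

section SelfMapOfDisc

variable {φ : ℂ → ℂ}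

theorem norm_sub_apply_zero_le_of_mapsTo_ball (hd : DifferentiableOn ℂ φ (ball 0 1))
    (hm : MapsTo φ (ball 0 1) (ball 0 1)) {z : ℂ} (hz : z ∈ ball (0 : ℂ) 1) :
    ‖φ z - φ 0‖ ≤ ‖z‖ * ‖1 - conj (φ 0) * φ z‖ := by
  have ha : ‖φ 0‖ < 1 := mem_ball_zero_iff.1 (hm (mem_ball_self one_pos))
  have hden : ∀ w ∈ ball (0 : ℂ) 1, 1 - conj (φ 0) * φ w ≠ 0 := fun w hw =>
    Complex.one_sub_conj_mul_ne_zero ha (mem_ball_zero_iff.1 (hm hw))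
  set ψ : ℂ → ℂ := fun w => (φ w - φ 0) / (1 - conj (φ 0) * φ w)
  have hψd : DifferentiableOn ℂ ψ (ball 0 1) :=
    (hd.sub_const _).div ((hd.const_mul _).const_sub _) hden
  have hψm : MapsTo ψ (ball 0 1) (closedBall 0 1) := fun w hw =>
    mem_closedBall_zero_iff.2
      (Complex.norm_sub_div_one_sub_conj_mul_lt_one ha (mem_ball_zero_iff.1 (hm hw))).le
  have hψz := Complex.norm_le_norm_of_mapsTo_ball hψd hψm (by simp [ψ]) (mem_ball_zero_iff.1 hz)
  rwa [norm_div, div_le_iff₀ (norm_pos_iff.2 (hden z hz))] at hψz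

theorem exists_pos_mul_one_sub_norm_le_of_mapsTo_ball (hd : DifferentiableOn ℂ φ (ball 0 1))
    (hm : MapsTo φ (ball 0 1) (ball 0 1)) :
    ∃ c > 0, ∀ z ∈ ball (0 : ℂ) 1, c * (1 - ‖z‖) ≤ 1 - ‖φ z‖ := by
  set A := ‖φ 0‖
  have hA : A < 1 := mem_ball_zero_iff.1 (hm (mem_ball_self one_pos))
  have hA0 : 0 ≤ A := norm_nonneg _
  refine ⟨(1 - A) / (2 * (1 + A)), div_pos (by linarith) (by linarith), fun z hz => ?_⟩
  rw [div_mul_eq_mul_div, div_le_iff₀ (by linarith)]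
  set B := ‖φ z‖
  set D := ‖1 - conj (φ 0) * φ z‖
  set N := ‖φ z - φ 0‖
  have hB : B < 1 := mem_ball_zero_iff.1 (hm hz)
  have hr : ‖z‖ < 1 := mem_ball_zero_iff.1 hz
  have hSP : N ≤ ‖z‖ * D := norm_sub_apply_zero_le_of_mapsTo_ball hd hm hz
  have hmob : (D - N) * (D + N) = (1 - A ^ 2) * (1 - B ^ 2) := by
    rw [← Complex.norm_one_sub_conj_mul_sq_sub_norm_sub_sq]; ring
  have hDA : 1 - A ≤ D := by
    calc 1 - A ≤ ‖(1 : ℂ)‖ - ‖conj (φ 0) * φ z‖ := by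
          rw [norm_one, norm_mul, Complex.norm_conj]
          nlinarith [norm_nonneg (φ z)]
      _ ≤ D := norm_sub_norm_le _ _
  -- Squeeze `D - N` between `(1 - A) * (1 - ‖z‖)` and `(1 - A ^ 2) * (1 - B ^ 2) / (1 - A)`.
  have h1 : (1 - A) * (1 - ‖z‖) ≤ D - N := by nlinarith [norm_nonneg z]
  have hDN : 0 ≤ D - N := (mul_nonneg (by linarith) (by linarith)).trans h1
  have h2 : (D - N) * (1 - A) ≤ (1 - A ^ 2) * (1 - B ^ 2) := by
    rw [← hmob]
    exact mul_le_mul_of_nonneg_left (by linarith [norm_nonneg (φ z - φ 0)]) hDN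
  have h3 : (1 - A) * (1 - ‖z‖) ≤ (1 + A) * (1 - B) * (1 + B) := by
    refine le_of_mul_le_mul_left ?_ (sub_pos.2 hA)
    nlinarith
  have h4 : (1 + A) * (1 - B) * (1 + B) ≤ (1 + A) * (1 - B) * 2 :=
    mul_le_mul_of_nonneg_left (by linarith) (mul_nonneg (by linarith) (by linarith))
  linarith

end SelfMapOfDisc

theorem HasDerivWithinAt.le_norm_of_eventually_mul_sub_le_norm_sub_norm {E : Type*}
    [NormedAddCommGroup E] [NormedSpace ℝ E] {u : ℝ → E} {u' : E} {a c : ℝ}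
    (hu : HasDerivWithinAt u u' (Iic a) a)
    (hgrowth : ∀ᶠ t in 𝓝[<] a, c * (a - t) ≤ ‖u a‖ - ‖u t‖) : c ≤ ‖u'‖ := by
  by_contra! hlt
  have hslope : ∀ᶠ t in 𝓝[<] a, ‖t - a‖⁻¹ * ‖u t - u a‖ < c :=
    nhdsWithin_mono _ Iio_subset_Iic_self (hu.limsup_norm_slope_le hlt)
  have hbelow : ∀ᶠ t in 𝓝[<] a, t < a := self_mem_nhdsWithin
  obtain ⟨t, ht, hslope_t, hgrowth_t⟩ := (hbelow.and (hslope.and hgrowth)).exists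
  have hpos : 0 < a - t := sub_pos.2 ht
  rw [Real.norm_eq_abs, abs_sub_comm, abs_of_pos hpos, inv_mul_lt_iff₀ hpos] at hslope_t
  have := norm_sub_norm_le (u a) (u t)
  rw [norm_sub_rev] at this
  linarith

theorem hasDerivWithinAt_Iic_one_comp_ofReal_mul_of_tendsto_deriv {φ : ℂ → ℂ} {ζ L : ℂ}
    (hd : DifferentiableOn ℂ φ (ball 0 1)) (hc : ContinuousWithinAt φ (ball 0 1) ζ)
    (hζ : ζ ∈ closedBall (0 : ℂ) 1) (hlim : Tendsto (deriv φ) (𝓝[ball 0 1] ζ) (𝓝 L)) :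
    HasDerivWithinAt (fun t : ℝ => φ (t * ζ)) (L * ζ) (Iic 1) 1 := by
  have hmaps : MapsTo (fun t : ℝ => (t : ℂ) * ζ) (Ioo 0 1) (ball 0 1) := fun t ht => by
    rw [mem_ball_zero_iff, norm_mul, Complex.norm_real, Real.norm_of_nonneg ht.1.le]
    exact mul_lt_one_of_nonneg_of_lt_one_left ht.1.le ht.2 (mem_closedBall_zero_iff.1 hζ)
  have hray : Continuous fun t : ℝ => (t : ℂ) * ζ := by fun_prop
  have hderiv : ∀ t ∈ Ioo (0 : ℝ) 1,
      HasDerivAt (fun t : ℝ => φ (t * ζ)) (deriv φ (t * ζ) * ζ) t := fun t ht =>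
    ((hd.differentiableAt (isOpen_ball.mem_nhds (hmaps ht))).hasDerivAt.comp (t : ℂ)
      (hasDerivAt_mul_const ζ)).comp_ofReal
  have hray_lim : Tendsto (fun t : ℝ => (t : ℂ) * ζ) (𝓝[<] 1) (𝓝[ball 0 1] ζ) :=
    tendsto_nhdsWithin_iff.2
      ⟨(hray.tendsto' 1 ζ (by simp)).mono_left nhdsWithin_le_nhds,
        mem_of_superset (Ioo_mem_nhdsLT one_pos) hmaps⟩
  refine hasDerivWithinAt_Iic_of_tendsto_deriv (s := Ioo 0 1)
    (fun t ht => (hderiv t ht).differentiableAt.differentiableWithinAt)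
    (hc.comp_of_eq hray.continuousWithinAt hmaps (by simp)) (Ioo_mem_nhdsLT one_pos) ?_
  refine ((hlim.comp hray_lim).mul_const ζ).congr' ?_
  filter_upwards [Ioo_mem_nhdsLT one_pos] with t ht
  exact ((hderiv t ht).deriv).symm

/-- Julia–Carathéodory consequence: if `φ` is a holomorphic self-map of the unit disc which
is `C¹` on the closed disc, `ζ` is a boundary point with `|φ ζ| = 1`, and `g` is the
continuous extension of `φ'` to the closed disc, then `g ζ ≠ 0`. -/
theorem boundary_derivative_ne_zero (φ : ℂ → ℂ)
    (hφd : DifferentiableOn ℂ φ (ball 0 1))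
    (hφm : Set.MapsTo φ (ball 0 1) (ball 0 1))
    (hφc : ContDiffOn ℝ 1 φ (closedBall 0 1))
    (g : ℂ → ℂ) (hg : ContinuousOn g (closedBall 0 1))
    (hgφ : ∀ z ∈ ball (0 : ℂ) 1, g z = deriv φ z)
    (ζ : ℂ) (hζ : ‖ζ‖ = 1) (hφζ : ‖φ ζ‖ = 1) :
    g ζ ≠ 0 := by
  obtain ⟨c, hc, hgrowth⟩ := exists_pos_mul_one_sub_norm_le_of_mapsTo_ball hφd hφm
  have hζ_mem : ζ ∈ closedBall (0 : ℂ) 1 := mem_closedBall_zero_iff.2 hζ.le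
  have hlim : Tendsto (deriv φ) (𝓝[ball 0 1] ζ) (𝓝 (g ζ)) :=
    (((hg ζ hζ_mem).mono ball_subset_closedBall).tendsto).congr'
      (eventually_nhdsWithin_of_forall hgφ)
  have hradial := hasDerivWithinAt_Iic_one_comp_ofReal_mul_of_tendsto_deriv hφd
    ((hφc.continuousOn ζ hζ_mem).mono ball_subset_closedBall) hζ_mem hlim
  have hradial_growth : ∀ᶠ t : ℝ in 𝓝[<] 1,
      c * (1 - t) ≤ ‖φ ((1 : ℝ) * ζ)‖ - ‖φ (t * ζ)‖ := by
    filter_upwards [Ioo_mem_nhdsLT one_pos] with t ht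
    have hnorm : ‖(t : ℂ) * ζ‖ = t := by
      rw [norm_mul, Complex.norm_real, hζ, mul_one, Real.norm_of_nonneg ht.1.le]
    simpa only [hnorm, Complex.ofReal_one, one_mul, hφζ] using
      hgrowth _ (mem_ball_zero_iff.2 (hnorm.trans_lt ht.2))
  have hc_le := hradial.le_norm_of_eventually_mul_sub_le_norm_sub_norm hradial_growth
  rw [norm_mul, hζ, mul_one] at hc_le
  exact norm_pos_iff.1 (hc.trans_le hc_le)
end
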